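/- Let N ≥ 2, 1 ≤ z ≤ N - 1 be integers, 1 < k < N real, λ = (N-k)/(N-1), p₀ = 1/N. Define λ_B = λ^z · ∏_{a=1}^{z} (1 - (a-1)·p₀) / ∏_{a=1}^{z} (1 - (a-1)·λ·p₀). Then 0 < λ_B < 1. -/

import Mathlib

open Finset

theorem sub_div_sub_one_mem_Ioo {n k : ℝ} (hk1 : 1 < k) (hkn : k < n) :
    0 < (n - k) / (n - 1) ∧ (n - k) / (n - 1) < 1 := by
  have hn1 : 0 < n - 1 := by linarith
  exact ⟨div_pos (by linarith) hn1, (div_lt_one hn1).2 (by linarith)⟩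

section ProdOneSub

variable {ι : Type*} (s : Finset ι) {c : ι → ℝ} {μ p : ℝ}

theorem prod_one_sub_mul_pos (hcp : ∀ i ∈ s, c i * p < 1) :
    0 < ∏ i ∈ s, (1 - c i * p) :=
  prod_pos fun i hi => sub_pos.2 (hcp i hi)

theorem prod_one_sub_mul_le_prod_one_sub_mul_mul (hc : ∀ i ∈ s, 0 ≤ c i)
    (hcp : ∀ i ∈ s, c i * p < 1) (hμ : μ ≤ 1) (hp : 0 ≤ p) :
    ∏ i ∈ s, (1 - c i * p) ≤ ∏ i ∈ s, (1 - c i * μ * p) := by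
  refine prod_le_prod (fun i hi => (sub_pos.2 (hcp i hi)).le) fun i hi => ?_
  have : c i * μ * p ≤ c i * p := by
    rw [mul_right_comm]
    exact mul_le_of_le_one_right (mul_nonneg (hc i hi) hp) hμ
  linarith

theorem pow_mul_prod_one_sub_div_prod_mem_Ioo (hc : ∀ i ∈ s, 0 ≤ c i)
    (hcp : ∀ i ∈ s, c i * p < 1) (hμ0 : 0 < μ) (hμ1 : μ < 1) (hp : 0 ≤ p) {z : ℕ}
    (hz : z ≠ 0) :
    0 < μ ^ z * (∏ i ∈ s, (1 - c i * p)) / ∏ i ∈ s, (1 - c i * μ * p) ∧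
      μ ^ z * (∏ i ∈ s, (1 - c i * p)) / ∏ i ∈ s, (1 - c i * μ * p) < 1 := by
  have hP := prod_one_sub_mul_pos s hcp
  have hPQ := prod_one_sub_mul_le_prod_one_sub_mul_mul s hc hcp hμ1.le hp
  have hQ := hP.trans_le hPQ
  refine ⟨by positivity, (div_lt_one hQ).2 ?_⟩
  calc μ ^ z * ∏ i ∈ s, (1 - c i * p) < ∏ i ∈ s, (1 - c i * p) :=
        mul_lt_of_lt_one_left hP (pow_lt_one₀ hμ0.le hμ1 hz)
    _ ≤ ∏ i ∈ s, (1 - c i * μ * p) := hPQ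

end ProdOneSub

theorem lambdaB_in_unit_interval_general (N z : ℕ) (hz1 : 1 ≤ z) (hzN : z ≤ N - 1)
    (k : ℝ) (hk1 : 1 < k) (hkN : k < N)
    (lam p₀ lamB : ℝ) (hlam : lam = ((N : ℝ) - k) / ((N : ℝ) - 1)) (hp₀ : p₀ = 1 / N)
    (hlamB : lamB = lam ^ z *
      (∏ a ∈ Finset.Icc 1 z, (1 - ((a : ℝ) - 1) * p₀)) /
      (∏ a ∈ Finset.Icc 1 z, (1 - ((a : ℝ) - 1) * lam * p₀))) :
    0 < lamB ∧ lamB < 1 := by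
  obtain ⟨hlam0, hlam1⟩ := hlam ▸ sub_div_sub_one_mem_Ioo hk1 hkN
  have hN : (0 : ℝ) < N := by linarith
  have hidx : ∀ a ∈ Icc 1 z, 1 ≤ a ∧ a < N := fun a ha => by
    rw [mem_Icc] at ha; omega
  subst hlamB
  refine pow_mul_prod_one_sub_div_prod_mem_Ioo _ (fun a ha => ?_) (fun a ha => ?_)
    hlam0 hlam1 (by rw [hp₀]; positivity) (by omega)
  · have : (1 : ℝ) ≤ a := by exact_mod_cast (hidx a ha).1
    linarith
  · have : (a : ℝ) < N := by exact_mod_cast (hidx a ha).2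
    rw [hp₀, mul_one_div, div_lt_one hN]
    linarith

theorem lambdaB_in_unit_interval (N z : ℕ) (hN : 2 ≤ N) (hz1 : 1 ≤ z) (hzN : z ≤ N - 1)
    (k : ℝ) (hk1 : 1 < k) (hkN : k < N)
    (lam p₀ lamB : ℝ) (hlam : lam = ((N : ℝ) - k) / ((N : ℝ) - 1)) (hp₀ : p₀ = 1 / N)
    (hlamB : lamB = lam ^ z *
      (∏ a ∈ Finset.Icc 1 z, (1 - ((a : ℝ) - 1) * p₀)) /
      (∏ a ∈ Finset.Icc 1 z, (1 - ((a : ℝ) - 1) * lam * p₀))) :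
    0 < lamB ∧ lamB < 1 :=
  lambdaB_in_unit_interval_general N z hz1 hzN k hk1 hkN lam p₀ lamB hlam hp₀ hlamB
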